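/- Let d ≥ 3, N ≥ 1, and let U ⊊ T_N = (Z/NZ)^d be a proper subset of the discrete torus. Then for all x, y ∈ T_N: G_N(x,y) = g^U(x,y) + E_x[ G_N(X_{T_U}, y) ] − N^{−d} E_x[T_U], where G_N is the zero-average Green function on T_N, g^U is the Green function of simple random walk on T_N killed when exiting U, and T_U is the exit time from U. -/

import Mathlib

open MeasureTheory ProbabilityTheory ENNReal Filter
open scoped Classical

namespace GFFPaper

/-- The lattice `ℤ^d`. -/
abbrev V (d : ℕ) := Fin d → ℤ

/-- The discrete torus `(ℤ/Nℤ)^d`. -/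
abbrev T (d N : ℕ) := Fin d → ZMod N

/-- One-step transition kernel of simple random walk on `ℤ^d`. -/
noncomputable def step (d : ℕ) (u v : V d) : ℝ≥0∞ :=
  if (∑ i, (v i - u i).natAbs) = 1 then (1 : ℝ≥0∞) / (2 * d) else 0

/-- `heat d x k y = P_x[X_k = y]` for simple random walk on `ℤ^d`. -/
noncomputable def heat (d : ℕ) (x : V d) : ℕ → V d → ℝ≥0∞
  | 0, y => if x = y then 1 else 0
  | (k+1), y => ∑' z, heat d x k z * step d z y

/-- Green function of simple random walk on `ℤ^d`. -/
noncomputable def green (d : ℕ) (x y : V d) : ℝ≥0∞ := ∑' k, heat d x k y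

/-- `kheat d U x k y = P_x[X_k = y, k < T_U]` (walk killed when exiting `U`). -/
noncomputable def kheat (d : ℕ) (U : Set (V d)) (x : V d) : ℕ → V d → ℝ≥0∞
  | 0, y => if x = y ∧ x ∈ U then 1 else 0
  | (k+1), y => if y ∈ U then ∑' z, kheat d U x k z * step d z y else 0

/-- Green function of simple random walk on `ℤ^d` killed when exiting `U`. -/
noncomputable def kgreen (d : ℕ) (U : Set (V d)) (x y : V d) : ℝ≥0∞ := ∑' k, kheat d U x k y

/-- Exit distribution: `exitDist d U x z = P_x[T_U < ∞, X_{T_U} = z]`. -/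
noncomputable def exitDist (d : ℕ) (U : Set (V d)) (x z : V d) : ℝ≥0∞ :=
  if z ∈ U then 0 else
    (if x = z ∧ x ∉ U then 1 else 0) + ∑' (k : ℕ), ∑' w, kheat d U x k w * step d w z

/-- The unit step in direction `s` on the torus. -/
def dirT (d N : ℕ) (s : Fin d × Bool) : T d N :=
  fun j => if j = s.1 then (if s.2 then 1 else -1) else 0

/-- One-step transition kernel of simple random walk on the torus. -/
noncomputable def stepT (d N : ℕ) (u v : T d N) : ℝ≥0∞ :=
  ((Finset.univ.filter (fun s : Fin d × Bool => v = u + dirT d N s)).card : ℝ≥0∞) / (2 * d)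

/-- `heatT d N x k y = P_x[X_k = y]` for simple random walk on the torus. -/
noncomputable def heatT (d N : ℕ) (x : T d N) : ℕ → T d N → ℝ≥0∞
  | 0, y => if x = y then 1 else 0
  | (k+1), y => ∑' z, heatT d N x k z * stepT d N z y

/-- Killed transition probabilities on the torus. -/
noncomputable def kheatT (d N : ℕ) (U : Set (T d N)) (x : T d N) : ℕ → T d N → ℝ≥0∞
  | 0, y => if x = y ∧ x ∈ U then 1 else 0
  | (k+1), y => if y ∈ U then ∑' z, kheatT d N U x k z * stepT d N z y else 0

/-- Green function of simple random walk on the torus killed when exiting `U`. -/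
noncomputable def kgreenT (d N : ℕ) (U : Set (T d N)) (x y : T d N) : ℝ≥0∞ :=
  ∑' k, kheatT d N U x k y

/-- Exit distribution from `U` on the torus. -/
noncomputable def exitDistT (d N : ℕ) (U : Set (T d N)) (x z : T d N) : ℝ≥0∞ :=
  if z ∈ U then 0 else
    (if x = z ∧ x ∉ U then 1 else 0) + ∑' (k : ℕ), ∑' w, kheatT d N U x k w * stepT d N w z

/-- Expected exit time `E_x[T_U]` on the torus, via `E_x[T_U] = ∑_k P_x[T_U > k]`. -/
noncomputable def etimeT (d N : ℕ) (U : Set (T d N)) (x : T d N) : ℝ≥0∞ :=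
  ∑' (k : ℕ), ∑' z, kheatT d N U x k z

/-- Continuous-time heat kernel `P_x[X̄_t = y]` on the torus (rate-1 exponential holding times). -/
noncomputable def hct (d N : ℕ) (t : ℝ) (x y : T d N) : ℝ :=
  ∑' k : ℕ, Real.exp (-t) * t ^ k / (Nat.factorial k) * (heatT d N x k y).toReal

/-- The zero-average Green function `G_N(x,y) = ∫_0^∞ (P_x[X̄_t = y] - N^{-d}) dt` on the torus. -/
noncomputable def G (d N : ℕ) (x y : T d N) : ℝ :=
  ∫ t in Set.Ioi (0:ℝ), (hct d N t x y - 1 / (N:ℝ) ^ d)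

/-- Canonical projection `π_N : ℤ^d → (ℤ/Nℤ)^d`. -/
def projN (d N : ℕ) (v : V d) : T d N := fun i => ((v i : ℤ) : ZMod N)

/-- The canonical lift of a torus point into `(-N/2, N/2]^d ∩ ℤ^d`. -/
def liftT (d N : ℕ) (x : T d N) : V d :=
  fun i => if (x i).val ≤ N / 2 then ((x i).val : ℤ) else ((x i).val : ℤ) - N

/-- Nearest-neighbour adjacency on `ℤ^d`. -/
def adj (d : ℕ) (x y : V d) : Prop := (∑ i, (x i - y i).natAbs) = 1

/-- Nearest-neighbour adjacency on the torus. -/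
def adjT (d N : ℕ) (x y : T d N) : Prop := ∃ s : Fin d × Bool, y = x + dirT d N s

/-- Outer boundary of a set in `ℤ^d`. -/
def latBoundary (d : ℕ) (A : Set (V d)) : Set (V d) := {y | y ∉ A ∧ ∃ x ∈ A, adj d x y}

/-- Outer boundary of a set in the torus. -/
def torBoundary (d N : ℕ) (A : Set (T d N)) : Set (T d N) := {y | y ∉ A ∧ ∃ x ∈ A, adjT d N x y}

/-- `v ∈ (-N/2, N/2]^d` (stated via `2 * v i` to avoid integer division). -/
def inHalfBox (d N : ℕ) (v : V d) : Prop := ∀ i, -(N:ℤ) < 2 * v i ∧ 2 * v i ≤ N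

/-- `U ⊆ T_N` is properly contained: the outer boundary of its canonical lift stays
in `(-N/2, N/2]^d`. -/
def ProperlyContained (d N : ℕ) (U : Set (T d N)) : Prop :=
  ∀ y ∈ latBoundary d (liftT d N '' U), inHalfBox d N y

/-- `x` and `y` are connected within `S` by a nearest-neighbour path (w.r.t. adjacency `A`). -/
def ConnIn {α : Type*} (A : α → α → Prop) (S : Set α) (x y : α) : Prop :=
  ∃ (n : ℕ) (γ : ℕ → α), γ 0 = x ∧ γ n = y ∧ (∀ k ≤ n, γ k ∈ S) ∧ ∀ k < n, A (γ k) (γ (k+1))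

/-- The connected component of `x` inside `S`. -/
def comp {α : Type*} (A : α → α → Prop) (S : Set α) (x : α) : Set α := {y | ConnIn A S x y}

/-- Graph distance on the torus. -/
noncomputable def distT (d N : ℕ) (x y : T d N) : ℕ :=
  sInf {n : ℕ | ∃ v : V d, projN d N v = y - x ∧ (∑ i, (v i).natAbs) = n}

/-- Euclidean norm on `ℤ^d`. -/
noncomputable def euclNorm (d : ℕ) (x : V d) : ℝ := Real.sqrt (∑ i, ((x i : ℝ))^2)

/-- `φ` is a Gaussian free field on `ℤ^d` under `P`: every finite linear combination is a
centered Gaussian with variance given by the Green function. -/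
def IsLatticeGFF (d : ℕ) {Ω : Type*} [MeasurableSpace Ω] (P : Measure Ω)
    (φ : V d → Ω → ℝ) : Prop :=
  ∀ (s : Finset (V d)) (c : V d → ℝ),
    Measure.map (fun ω => ∑ x ∈ s, c x * φ x ω) P =
      gaussianReal 0 (∑ x ∈ s, ∑ y ∈ s, c x * (green d x y).toReal * c y).toNNReal

/-- `Ψ` is a zero-average Gaussian free field on the torus under `P`: every finite linear
combination is a centered Gaussian with variance given by the zero-average Green function. -/
def IsTorusGFF (d N : ℕ) {Ω : Type*} [MeasurableSpace Ω] (P : Measure Ω)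
    (Ψ : T d N → Ω → ℝ) : Prop :=
  ∀ (s : Finset (T d N)) (c : T d N → ℝ),
    Measure.map (fun ω => ∑ x ∈ s, c x * Ψ x ω) P =
      gaussianReal 0 (∑ x ∈ s, ∑ y ∈ s, c x * G d N x y * c y).toNNReal

/-- Level-set percolation probability `η(h)` (as a value in `ℝ≥0∞`). -/
noncomputable def percProb (d : ℕ) {Ω : Type*} [MeasurableSpace Ω] (P : Measure Ω)
    (φ : V d → Ω → ℝ) (h : ℝ) : ℝ≥0∞ :=
  P {ω | (comp (adj d) {v | h ≤ φ v ω} (0 : V d)).Infinite}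

/-- Critical level `h⋆` of level-set percolation. -/
noncomputable def hStar (d : ℕ) {Ω : Type*} [MeasurableSpace Ω] (P : Measure Ω)
    (φ : V d → Ω → ℝ) : ℝ :=
  sInf {h : ℝ | percProb d P φ h = 0}

/-- Second critical level `h⋆⋆`: above it the two-point connectivity function of the level set
decays (stretched-)exponentially (with the polylogarithmic correction covering `d = 3`). -/
noncomputable def hStarStar (d : ℕ) {Ω : Type*} [MeasurableSpace Ω] (P : Measure Ω)
    (φ : V d → Ω → ℝ) : ℝ :=
  sInf {a : ℝ | ∃ c > (0:ℝ), ∃ C > (0:ℝ), ∀ x : V d,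
    P {ω | ConnIn (adj d) {v | a ≤ φ v ω} 0 x} ≤
      ENNReal.ofReal (C * Real.exp (-(c * euclNorm d x) / (Real.log (2 + euclNorm d x)) ^ 6))}

/-- The box `U_N = {-⌈N/2⌉+2, …, ⌊N/2⌋-1}^d` in `ℤ^d`. -/
def UBox (d N : ℕ) : Set (V d) :=
  {v | ∀ i, -(((N+1)/2 : ℕ) : ℤ) + 2 ≤ v i ∧ v i ≤ ((N/2 : ℕ) : ℤ) - 1}

/-- The box `(-(N-N^δ-2)/2, (N-N^δ-2)/2]^d` in `ℤ^d`. -/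
noncomputable def BBox (d N : ℕ) (δ : ℝ) : Set (V d) :=
  {v | ∀ i, -((N - (N:ℝ)^δ - 2)/2) < (v i : ℝ) ∧ (v i : ℝ) ≤ (N - (N:ℝ)^δ - 2)/2}

/-- The projection of `BBox` to the torus. -/
noncomputable def BBoxT (d N : ℕ) (δ : ℝ) : Set (T d N) := projN d N '' BBox d N δ


end GFFPaper

/-!
Write `D(x) = g^U(x,y) + E_x[G_N(X_{T_U},y)] - N^{-d} E_x[T_U] - G_N(x,y)`. Off `U` it vanishes
trivially. On `U` it is harmonic for the transition matrix `P` of the walk: first-step analysis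
gives `g^U = δ_y + P g^U`, `E[T_U] = 1 + P E[T_U]` and `h_U = P h_U` for the exit distribution,
while integrating the backward equation `∂ₜ e^{t(P-1)} = (P-1) e^{t(P-1)}` over `(0, ∞)` gives
`(P - 1) G_N(·, y) = N^{-d} - δ_y`, so the `δ_y` and `N^{-d}` terms cancel. As `P` is irreducible
and `U ≠ T_N`, the maximum principle forces `D = 0`.

The integral defining `G_N` converges because `e^{t(P-1)}` tends to the uniform matrix
exponentially fast (Doeblin's argument: `e^{P-1}` has positive entries), and `E_x[T_U] < ∞`
because from every point the walk leaves `U` within a fixed number of steps with probability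
bounded below.
-/

namespace Matrix

open NormedSpace Set Topology

variable {ι : Type*} [Fintype ι] [DecidableEq ι] {P : Matrix ι ι ℝ}

theorem pow_apply_mul_pow_apply_le (hP : ∀ i j, 0 ≤ P i j) (j k : ℕ) (x y z : ι) :
    (P ^ j) x y * (P ^ k) y z ≤ (P ^ (j + k)) x z := by
  rw [pow_add, mul_apply]
  exact Finset.single_le_sum (fun w _ => mul_nonneg (pow_apply_nonneg hP j x w)
    (pow_apply_nonneg hP k w z)) (Finset.mem_univ y)

/-- `e^{t(P - 1)}`: the transition matrices of the continuous-time chain that jumps according to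
`P` at rate one. -/
noncomputable def heatSemigroup (P : Matrix ι ι ℝ) (t : ℝ) : Matrix ι ι ℝ :=
  Real.exp (-t) • exp (t • P)

noncomputable def zeroAvgGreen (P : Matrix ι ι ℝ) (x y : ι) : ℝ :=
  ∫ t in Ioi (0 : ℝ), (heatSemigroup P t x y - (Fintype.card ι : ℝ)⁻¹)

section Calculus

-- `HasSum` and `HasDerivAt` for matrices need a norm; the entrywise statements do not see it.
attribute [local instance] Matrix.linftyOpNormedRing Matrix.linftyOpNormedAlgebra

theorem hasSum_heatSemigroup_apply (P : Matrix ι ι ℝ) (t : ℝ) (x y : ι) :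
    HasSum (fun k : ℕ => Real.exp (-t) * t ^ k / k.factorial * (P ^ k) x y)
      (heatSemigroup P t x y) := by
  have h := ((exp_series_hasSum_exp' (𝕂 := ℝ) (t • P)).const_smul (Real.exp (-t))).mapL
    (LinearMap.toContinuousLinearMap (entryLinearMap ℝ ℝ x y))
  simp only [LinearMap.coe_toContinuousLinearMap', entryLinearMap_apply, smul_pow, smul_apply,
    smul_eq_mul] at h
  have e : (fun k : ℕ => Real.exp (-t) * t ^ k / k.factorial * (P ^ k) x y)
      = fun k : ℕ => Real.exp (-t) * ((k.factorial : ℝ)⁻¹ * (t ^ k * (P ^ k) x y)) :=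
    funext fun k => by ring
  rw [e]
  exact h

theorem hasDerivAt_heatSemigroup_apply (P : Matrix ι ι ℝ) (t : ℝ) (x y : ι) :
    HasDerivAt (fun s => heatSemigroup P s x y)
      ((P * heatSemigroup P t - heatSemigroup P t) x y) t := by
  have h : HasDerivAt (heatSemigroup P) (P * heatSemigroup P t - heatSemigroup P t) t := by
    refine (((Real.hasDerivAt_exp (-t)).comp t (hasDerivAt_neg t)).smul
      (hasDerivAt_exp_smul_const' P t)).congr_deriv ?_
    simp only [heatSemigroup, Function.comp_apply, mul_neg, mul_one, neg_smul, mul_smul_comm]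
    abel
  exact (LinearMap.toContinuousLinearMap (entryLinearMap ℝ ℝ x y)).hasFDerivAt.comp_hasDerivAt
    t h

end Calculus

theorem continuous_heatSemigroup_apply (P : Matrix ι ι ℝ) (x y : ι) :
    Continuous fun t => heatSemigroup P t x y :=
  continuous_iff_continuousAt.2 fun t => (hasDerivAt_heatSemigroup_apply P t x y).continuousAt

theorem heatSemigroup_zero (P : Matrix ι ι ℝ) : heatSemigroup P 0 = 1 := by
  simp [heatSemigroup]

theorem heatSemigroup_add (P : Matrix ι ι ℝ) (s t : ℝ) :
    heatSemigroup P (s + t) = heatSemigroup P s * heatSemigroup P t := by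
  simp only [heatSemigroup, smul_mul_smul_comm, add_smul, neg_add, Real.exp_add]
  rw [exp_add_of_commute _ _ (((Commute.refl P).smul_left s).smul_right t)]

theorem heatSemigroup_transpose (P : Matrix ι ι ℝ) (t : ℝ) :
    heatSemigroup Pᵀ t = (heatSemigroup P t)ᵀ := by
  rw [heatSemigroup, heatSemigroup, transpose_smul, ← exp_transpose, transpose_smul]

theorem heatSemigroup_mem_rowStochastic (hP : P ∈ rowStochastic ℝ ι) {t : ℝ} (ht : 0 ≤ t) :
    heatSemigroup P t ∈ rowStochastic ℝ ι := by
  have hw : ∀ k : ℕ, 0 ≤ Real.exp (-t) * t ^ k / k.factorial := fun k => by positivity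
  refine mem_rowStochastic_iff_sum.2 ⟨fun x y => ?_, fun x => ?_⟩
  · exact (hasSum_heatSemigroup_apply P t x y).nonneg fun k =>
      mul_nonneg (hw k) (nonneg_of_mem_rowStochastic (pow_mem hP k))
  · have hrow : HasSum (fun k : ℕ => Real.exp (-t) * t ^ k / k.factorial)
        (∑ y, heatSemigroup P t x y) := by
      convert hasSum_sum fun y _ => hasSum_heatSemigroup_apply P t x y with k
      rw [← Finset.mul_sum, sum_row_of_mem_rowStochastic (pow_mem hP k), mul_one]
    refine hrow.unique ?_
    simpa [div_eq_mul_inv, mul_assoc, ← Real.exp_eq_exp_ℝ, ← Real.exp_add] using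
      ((NormedSpace.expSeries_div_hasSum_exp t).mul_left (Real.exp (-t)))

theorem heatSemigroup_mem_colStochastic (hP : P ∈ colStochastic ℝ ι) {t : ℝ} (ht : 0 ≤ t) :
    heatSemigroup P t ∈ colStochastic ℝ ι := by
  rw [← transpose_mem_rowStochastic_iff_mem_colStochastic, ← heatSemigroup_transpose]
  exact heatSemigroup_mem_rowStochastic (transpose_mem_rowStochastic_iff_mem_colStochastic.2 hP) ht

theorem heatSemigroup_apply_pos (hP : ∀ x y, 0 ≤ P x y) {t : ℝ} (ht : 0 < t) {x y : ι}
    {k : ℕ} (hk : 0 < (P ^ k) x y) : 0 < heatSemigroup P t x y :=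
  (by positivity : 0 < Real.exp (-t) * t ^ k / k.factorial * (P ^ k) x y).trans_le <|
    le_hasSum (hasSum_heatSemigroup_apply P t x y) k fun j _ => by
      have := pow_apply_nonneg hP j x y
      positivity

/-- Doeblin's contraction. -/
theorem abs_mul_apply_sub_inv_card_le {A B : Matrix ι ι ℝ} (hA : A ∈ rowStochastic ℝ ι)
    (hB : B ∈ colStochastic ℝ ι) {ε M : ℝ} (hε : ∀ x z, ε ≤ A x z) {y : ι}
    (hM : ∀ z, |B z y - (Fintype.card ι : ℝ)⁻¹| ≤ M) (x : ι) :
    |(A * B) x y - (Fintype.card ι : ℝ)⁻¹| ≤ (1 - Fintype.card ι * ε) * M := by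
  set c := (Fintype.card ι : ℝ)⁻¹
  have hcard : (Fintype.card ι : ℝ) * c = 1 :=
    mul_inv_cancel₀ (Nat.cast_ne_zero.2 (Fintype.card_pos_iff.2 ⟨x⟩).ne')
  have hexpand : (A * B) x y - c = ∑ z, (A x z - ε) * (B z y - c) := by
    simp only [sub_mul, mul_sub, Finset.sum_sub_distrib, ← Finset.mul_sum, ← Finset.sum_mul,
      mul_apply, sum_row_of_mem_rowStochastic hA, sum_col_of_mem_colStochastic hB,
      Finset.sum_const, Finset.card_univ, nsmul_eq_mul]
    linear_combination -ε * hcard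
  calc |(A * B) x y - c| ≤ ∑ z, |(A x z - ε) * (B z y - c)| := by
        rw [hexpand]; exact Finset.abs_sum_le_sum_abs _ _
    _ ≤ ∑ z, (A x z - ε) * M := Finset.sum_le_sum fun z _ => by
        rw [abs_mul, abs_of_nonneg (sub_nonneg.2 (hε x z))]
        exact mul_le_mul_of_nonneg_left (hM z) (sub_nonneg.2 (hε x z))
    _ = (1 - Fintype.card ι * ε) * M := by
        rw [← Finset.sum_mul, Finset.sum_sub_distrib, sum_row_of_mem_rowStochastic hA,
          Finset.sum_const, Finset.card_univ, nsmul_eq_mul]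

section Convergence

variable [Nonempty ι]

theorem exists_abs_heatSemigroup_sub_le_pow (hP : P ∈ doublyStochastic ℝ ι)
    (hirr : P.IsIrreducible) :
    ∃ ρ : ℝ, 0 ≤ ρ ∧ ρ < 1 ∧ ∀ (n : ℕ) {t : ℝ}, 0 ≤ t → ∀ x y,
      |heatSemigroup P (t + n) x y - (Fintype.card ι : ℝ)⁻¹| ≤ ρ ^ n := by
  obtain ⟨hProw, hPcol⟩ := mem_doublyStochastic_iff_mem_rowStochastic_and_mem_colStochastic.1 hP
  have hpos : ∀ x y, 0 < heatSemigroup P 1 x y := fun x y => by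
    obtain ⟨k, -, hk⟩ := (isIrreducible_iff_exists_pow_pos hirr.nonneg).1 hirr x y
    exact heatSemigroup_apply_pos hirr.nonneg one_pos hk
  obtain ⟨p, hp⟩ := Finite.exists_min fun p : ι × ι => heatSemigroup P 1 p.1 p.2
  set ε := heatSemigroup P 1 p.1 p.2
  have h1 := heatSemigroup_mem_rowStochastic hProw zero_le_one
  have hcard : (0 : ℝ) < Fintype.card ι := Nat.cast_pos.2 Fintype.card_pos
  refine ⟨1 - Fintype.card ι * ε, ?_, by nlinarith [hpos p.1 p.2], fun n => ?_⟩
  · have := Finset.sum_le_sum fun z (_ : z ∈ Finset.univ) => hp (p.1, z)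
    rw [Finset.sum_const, Finset.card_univ, nsmul_eq_mul, sum_row_of_mem_rowStochastic h1] at this
    linarith
  induction n with
  | zero =>
    intro t ht x y
    have h := heatSemigroup_mem_rowStochastic hProw (by simpa using ht)
    have hc : (Fintype.card ι : ℝ)⁻¹ ≤ 1 :=
      inv_le_one_of_one_le₀ (by exact_mod_cast Fintype.card_pos)
    simp only [Nat.cast_zero, add_zero, pow_zero, abs_le]
    constructor <;> nlinarith [nonneg_of_mem_rowStochastic h (i := x) (j := y),
      le_one_of_mem_rowStochastic h (i := x) (j := y), inv_pos.2 hcard]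
  | succ n ih =>
    intro t ht x y
    rw [show t + ↑(n + 1) = 1 + (t + n) by push_cast; ring, heatSemigroup_add, pow_succ']
    exact abs_mul_apply_sub_inv_card_le h1 (heatSemigroup_mem_colStochastic hPcol (by positivity))
      (fun x z => hp (x, z)) (fun z => ih ht z y) x

theorem exists_abs_heatSemigroup_sub_le_exp (hP : P ∈ doublyStochastic ℝ ι)
    (hirr : P.IsIrreducible) :
    ∃ C b : ℝ, 0 < b ∧ ∀ t, 0 ≤ t → ∀ x y,
      |heatSemigroup P t x y - (Fintype.card ι : ℝ)⁻¹| ≤ C * Real.exp (-(b * t)) := by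
  obtain ⟨ρ, hρ0, hρ1, hρ⟩ := exists_abs_heatSemigroup_sub_le_pow hP hirr
  obtain ⟨r, hρr, hr0, hr1⟩ : ∃ r : ℝ, ρ ≤ r ∧ 0 < r ∧ r < 1 :=
    ⟨max ρ 2⁻¹, le_max_left _ _, by positivity, max_lt hρ1 (by norm_num)⟩
  have hlog := Real.log_neg hr0 hr1
  refine ⟨Real.exp (-Real.log r), -Real.log r, neg_pos.2 hlog, fun t ht x y => ?_⟩
  have hfloor := hρ ⌊t⌋₊ (sub_nonneg.2 (Nat.floor_le ht)) x y
  rw [sub_add_cancel] at hfloor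
  calc _ ≤ ρ ^ ⌊t⌋₊ := hfloor
    _ ≤ r ^ ⌊t⌋₊ := pow_le_pow_left₀ hρ0 hρr _
    _ = Real.exp (⌊t⌋₊ * Real.log r) := by rw [Real.exp_nat_mul, Real.exp_log hr0]
    _ ≤ _ := by
      rw [← Real.exp_add]
      exact Real.exp_le_exp.2 (by nlinarith [Nat.lt_floor_add_one t])

theorem integrableOn_heatSemigroup_sub (hP : P ∈ doublyStochastic ℝ ι) (hirr : P.IsIrreducible)
    (x y : ι) :
    IntegrableOn (fun t => heatSemigroup P t x y - (Fintype.card ι : ℝ)⁻¹) (Ioi 0) := by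
  obtain ⟨C, b, hb, hbound⟩ := exists_abs_heatSemigroup_sub_le_exp hP hirr
  refine Integrable.mono' ((exp_neg_integrableOn_Ioi 0 hb).const_mul C)
    ((continuous_heatSemigroup_apply P x y).sub continuous_const).aestronglyMeasurable ?_
  filter_upwards [ae_restrict_mem measurableSet_Ioi] with t ht
  simpa [neg_mul] using hbound t (le_of_lt ht) x y

theorem tendsto_heatSemigroup_apply (hP : P ∈ doublyStochastic ℝ ι) (hirr : P.IsIrreducible)
    (x y : ι) :
    Tendsto (fun t => heatSemigroup P t x y) atTop (𝓝 (Fintype.card ι : ℝ)⁻¹) := by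
  obtain ⟨C, b, hb, hbound⟩ := exists_abs_heatSemigroup_sub_le_exp hP hirr
  have hdecay : Tendsto (fun t => C * Real.exp (-(b * t))) atTop (𝓝 0) := by
    simpa using (Real.tendsto_exp_atBot.comp
      (tendsto_neg_atTop_atBot.comp (tendsto_id.const_mul_atTop hb))).const_mul C
  refine tendsto_sub_nhds_zero_iff.1 (squeeze_zero_norm' ?_ hdecay)
  filter_upwards [eventually_ge_atTop 0] with t ht
  exact hbound t ht x y

end Convergence

/-- Integrate the backward equation `∂ₜ e^{t(P - 1)} = (P - 1) e^{t(P - 1)}` over `(0, ∞)`. -/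
theorem mulVec_zeroAvgGreen (hP : P ∈ rowStochastic ℝ ι)
    (hint : ∀ x y,
      IntegrableOn (fun t => heatSemigroup P t x y - (Fintype.card ι : ℝ)⁻¹) (Ioi 0))
    (hlim : ∀ x y,
      Tendsto (fun t => heatSemigroup P t x y) atTop (𝓝 (Fintype.card ι : ℝ)⁻¹))
    (x y : ι) :
    (P *ᵥ fun w => zeroAvgGreen P w y) x
      = zeroAvgGreen P x y + (Fintype.card ι : ℝ)⁻¹ - (1 : Matrix ι ι ℝ) x y := by
  set c := (Fintype.card ι : ℝ)⁻¹
  have hderiv : ∀ t, HasDerivAt (fun s => heatSemigroup P s x y)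
      (∑ w, P x w * (heatSemigroup P t w y - c) - (heatSemigroup P t x y - c)) t := fun t => by
    convert hasDerivAt_heatSemigroup_apply P t x y using 1
    simp only [sub_apply, mul_apply, mul_sub, Finset.sum_sub_distrib, ← Finset.sum_mul,
      sum_row_of_mem_rowStochastic hP, one_mul]
    ring
  have hFTC := integral_Ioi_of_hasDerivAt_of_tendsto' (fun t _ => hderiv t)
    ((integrable_finsetSum _ fun w _ => (hint w y).const_mul (P x w)).sub (hint x y)) (hlim x y)
  rw [integral_sub (integrable_finsetSum _ fun w _ => (hint w y).const_mul (P x w)) (hint x y),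
    integral_finsetSum _ fun w _ => (hint w y).const_mul (P x w), heatSemigroup_zero] at hFTC
  simp only [integral_const_mul] at hFTC
  simp only [mulVec, dotProduct, zeroAvgGreen]
  linarith

theorem apply_eq_of_mulVec_apply_eq_of_forall_le (hP : P ∈ rowStochastic ℝ ι) {f : ι → ℝ}
    {w z : ι} (hw : (P *ᵥ f) w = f w) (hmax : ∀ u, f u ≤ f w) (hwz : 0 < P w z) :
    f z = f w := by
  have hsum : ∑ u, P w u * (f w - f u) = 0 := by
    simp only [mul_sub, Finset.sum_sub_distrib, ← Finset.sum_mul,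
      sum_row_of_mem_rowStochastic hP, one_mul]
    rw [← hw]
    simp [mulVec, dotProduct]
  have := (Finset.sum_eq_zero_iff_of_nonneg fun u _ => mul_nonneg
    (nonneg_of_mem_rowStochastic hP) (sub_nonneg.2 (hmax u))).1 hsum z (Finset.mem_univ z)
  linarith [(mul_eq_zero.1 this).resolve_left hwz.ne']

theorem apply_le_zero_of_mulVec_apply_eq (hP : P ∈ rowStochastic ℝ ι) (hirr : P.IsIrreducible)
    {U : Set ι} (hU : U ≠ univ) {f : ι → ℝ} (hf : ∀ x ∈ U, (P *ᵥ f) x = f x)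
    (hf0 : ∀ x ∉ U, f x = 0) (x : ι) : f x ≤ 0 := by
  have : Nonempty ι := ⟨x⟩
  obtain ⟨x₀, hx₀⟩ := Finite.exists_max f
  by_contra! hpos
  have hpos₀ : 0 < f x₀ := hpos.trans_le (hx₀ x)
  have hreach : ∀ k z, 0 < (P ^ k) x₀ z → f z = f x₀ := by
    intro k
    induction k with
    | zero =>
      intro z hz
      by_cases h : x₀ = z
      · rw [h]
      · simp [h] at hz
    | succ k ih =>
      intro z hz
      rw [pow_succ, mul_apply, Finset.sum_pos_iff_of_nonneg fun w _ =>
        mul_nonneg (pow_apply_nonneg hirr.nonneg k x₀ w) (hirr.nonneg w z)] at hz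
      obtain ⟨w, -, hw⟩ := hz
      obtain ⟨hx₀w, hwz⟩ := (pos_and_pos_or_neg_and_neg_of_mul_pos hw).resolve_right
        fun h => by linarith [h.2, hirr.nonneg w z]
      have hfw := ih w hx₀w
      have hwU : w ∈ U := by_contra fun hwU => by linarith [hf0 w hwU]
      rw [← hfw]
      exact apply_eq_of_mulVec_apply_eq_of_forall_le hP (hf w hwU) (fun u => hfw ▸ hx₀ u) hwz
  obtain ⟨u, hu⟩ := (Set.ne_univ_iff_exists_notMem U).1 hU
  obtain ⟨k, -, hk⟩ := (isIrreducible_iff_exists_pow_pos hirr.nonneg).1 hirr x₀ u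
  linarith [hreach k u hk, hf0 u hu]

theorem eq_zero_of_mulVec_apply_eq (hP : P ∈ rowStochastic ℝ ι) (hirr : P.IsIrreducible)
    {U : Set ι} (hU : U ≠ univ) {f : ι → ℝ} (hf : ∀ x ∈ U, (P *ᵥ f) x = f x)
    (hf0 : ∀ x ∉ U, f x = 0) : f = 0 := by
  funext x
  refine le_antisymm (apply_le_zero_of_mulVec_apply_eq hP hirr hU hf hf0 x) ?_
  have := apply_le_zero_of_mulVec_apply_eq hP hirr hU (f := -f)
    (fun x hx => by rw [mulVec_neg, Pi.neg_apply, Pi.neg_apply, hf x hx])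
    (fun x hx => by rw [Pi.neg_apply, hf0 x hx, neg_zero]) x
  simpa using this

end Matrix

theorem ENNReal.tsum_pow_div_ne_top {ρ : ℝ≥0∞} (hρ : ρ < 1) {K : ℕ} (hK : 0 < K) :
    ∑' k : ℕ, ρ ^ (k / K) ≠ ⊤ := by
  have : NeZero K := ⟨hK.ne'⟩
  have hdiv : ∀ p : ℕ × Fin K, (Nat.divModEquiv K).symm p / K = p.1 := fun p => by
    simp only [Nat.divModEquiv, Equiv.coe_fn_symm_mk]
    rw [add_comm, Nat.add_mul_div_right _ _ hK, Nat.div_eq_of_lt p.2.2, zero_add]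
  rw [← (Nat.divModEquiv K).symm.tsum_eq, tsum_congr fun p => congrArg (ρ ^ ·) (hdiv p),
    ENNReal.tsum_prod (f := fun n (_ : Fin K) => ρ ^ n)]
  simp only [tsum_fintype, Finset.sum_const, Finset.card_univ, Fintype.card_fin, nsmul_eq_mul,
    ENNReal.tsum_mul_left, ENNReal.tsum_geometric]
  exact ENNReal.mul_ne_top (ENNReal.natCast_ne_top K)
    (ENNReal.inv_ne_top.2 (tsub_pos_of_lt hρ).ne')


namespace GFFPaper

open Matrix Set

section Torus

variable {d N : ℕ}

theorem dirT_flip (s : Fin d × Bool) : dirT d N (s.1, !s.2) = -dirT d N s := by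
  funext j
  simp only [Pi.neg_apply, dirT]
  by_cases h : j = s.1 <;> cases s.2 <;> simp [h]

theorem stepT_comm (u v : T d N) : stepT d N u v = stepT d N v u := by
  unfold stepT
  congr 2
  refine Finset.card_bij (fun s _ => (s.1, !s.2)) (fun s hs => ?_) (fun a _ b _ h => ?_)
    (fun s hs => ⟨(s.1, !s.2), ?_, by simp⟩)
  · simp only [Finset.mem_filter, Finset.mem_univ, true_and] at hs ⊢
    rw [dirT_flip, hs, add_neg_cancel_right]
  · simp only [Prod.mk.injEq, Bool.not_inj_iff] at h
    exact Prod.ext h.1 h.2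
  · simp only [Finset.mem_filter, Finset.mem_univ, true_and] at hs ⊢
    rw [dirT_flip, hs, add_neg_cancel_right]

theorem stepT_ne_top (hd : d ≠ 0) (u v : T d N) : stepT d N u v ≠ ⊤ := by
  simp [stepT, ENNReal.div_eq_top, hd]

theorem stepT_add_dirT_ne_zero (u : T d N) (s : Fin d × Bool) :
    stepT d N u (u + dirT d N s) ≠ 0 := by
  simp only [stepT, ne_eq, ENNReal.div_eq_zero_iff, Nat.cast_eq_zero, Finset.card_eq_zero,
    Finset.filter_eq_empty_iff, not_or, not_forall, not_not]
  exact ⟨⟨s, Finset.mem_univ _, rfl⟩, ENNReal.mul_ne_top (by simp) (by simp)⟩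

theorem sum_stepT [NeZero N] (hd : d ≠ 0) (u : T d N) : ∑ v, stepT d N u v = 1 := by
  have hfib : ∑ v : T d N, (Finset.univ.filter fun s => v = u + dirT d N s).card = 2 * d := by
    simp_rw [Finset.filter_congr fun s _ => @eq_comm _ _ (u + dirT d N s)]
    rw [← Finset.card_eq_sum_card_fiberwise fun s _ => Finset.mem_univ (u + dirT d N s)]
    simp [mul_comm]
  simp only [stepT, ENNReal.div_eq_inv_mul, ← Finset.mul_sum]
  rw [← Nat.cast_sum, hfib]
  push_cast
  exact ENNReal.inv_mul_cancel (by simp [hd]) (ENNReal.mul_ne_top (by simp) (by simp))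

theorem stepT_le_one [NeZero N] (hd : d ≠ 0) (u v : T d N) : stepT d N u v ≤ 1 :=
  (sum_stepT hd u).symm ▸ Finset.single_le_sum (fun _ _ => zero_le) (Finset.mem_univ v)

noncomputable def stepMatrix (d N : ℕ) : Matrix (T d N) (T d N) ℝ :=
  Matrix.of fun u v => (stepT d N u v).toReal

theorem stepMatrix_nonneg (u v : T d N) : 0 ≤ stepMatrix d N u v :=
  ENNReal.toReal_nonneg

theorem stepT_eq_ofReal (hd : d ≠ 0) (u v : T d N) :
    stepT d N u v = ENNReal.ofReal (stepMatrix d N u v) :=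
  (ENNReal.ofReal_toReal (stepT_ne_top hd u v)).symm

variable [NeZero N]

theorem stepMatrix_mem_doublyStochastic (hd : d ≠ 0) :
    stepMatrix d N ∈ doublyStochastic ℝ (T d N) := by
  have hrow : ∀ u : T d N, ∑ v, stepMatrix d N u v = 1 := fun u => by
    simp only [stepMatrix, of_apply]
    rw [← ENNReal.toReal_sum fun v _ => stepT_ne_top hd u v, sum_stepT hd, ENNReal.toReal_one]
  refine mem_doublyStochastic_iff_sum.2 ⟨stepMatrix_nonneg, hrow, fun v => ?_⟩
  simpa only [stepMatrix, of_apply, stepT_comm _ v] using hrow v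

theorem stepMatrix_mem_rowStochastic (hd : d ≠ 0) :
    stepMatrix d N ∈ rowStochastic ℝ (T d N) :=
  (mem_doublyStochastic_iff_mem_rowStochastic_and_mem_colStochastic.1
    (stepMatrix_mem_doublyStochastic hd)).1

theorem stepMatrix_isIrreducible (hd : d ≠ 0) : (stepMatrix d N).IsIrreducible := by
  set P := stepMatrix d N
  have hstep : ∀ u s, 0 < P u (u + dirT d N s) := fun u s =>
    ENNReal.toReal_pos (stepT_add_dirT_ne_zero u s) (stepT_ne_top hd _ _)
  have hreach : ∀ v ∈ AddSubmonoid.closure (range (dirT d N)), ∀ x,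
      ∃ k, 0 < (P ^ k) x (x + v) := by
    intro v hv
    induction hv using AddSubmonoid.closure_induction with
    | mem v hv =>
      obtain ⟨s, rfl⟩ := hv
      exact fun x => ⟨1, by simpa using hstep x s⟩
    | zero => exact fun x => ⟨0, by simp⟩
    | add v w _ _ hv hw =>
      intro x
      obtain ⟨j, hj⟩ := hv x
      obtain ⟨k, hk⟩ := hw (x + v)
      refine ⟨j + k, (mul_pos hj hk).trans_le ?_⟩
      rw [← add_assoc]
      exact pow_apply_mul_pow_apply_le stepMatrix_nonneg j k _ _ _
  have hspan : ∀ v : T d N, v ∈ AddSubmonoid.closure (range (dirT d N)) := fun v => by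
    rw [← Finset.univ_sum_single v]
    refine AddSubmonoid.sum_mem _ fun i _ => ?_
    have : Pi.single i (v i) = (v i).val • dirT d N (i, true) := by
      funext j
      by_cases h : j = i
      · subst h; simp [dirT]
      · simp [dirT, h]
    rw [this]
    exact AddSubmonoid.nsmul_mem _ (AddSubmonoid.subset_closure (mem_range_self _)) _
  refine (isIrreducible_iff_exists_pow_pos stepMatrix_nonneg).2 fun x y => ?_
  -- a first step to a neighbour makes the exponent positive
  obtain ⟨i⟩ : Nonempty (Fin d) := ⟨⟨0, Nat.pos_of_ne_zero hd⟩⟩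
  set z := x + dirT d N (i, true)
  obtain ⟨k, hk⟩ := hreach (y - z) (hspan _) z
  rw [add_sub_cancel] at hk
  refine ⟨1 + k, by omega, (mul_pos (by simpa using hstep x (i, true)) hk).trans_le ?_⟩
  simpa using pow_apply_mul_pow_apply_le stepMatrix_nonneg 1 k x z y

theorem heatT_eq_ofReal (hd : d ≠ 0) (x : T d N) (k : ℕ) (y : T d N) :
    heatT d N x k y = ENNReal.ofReal ((stepMatrix d N ^ k) x y) := by
  induction k generalizing y with
  | zero => by_cases h : x = y <;> simp [heatT, one_apply, h]
  | succ k ih =>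
    have hP0 := pow_apply_nonneg stepMatrix_nonneg k x
    rw [heatT, tsum_fintype, pow_succ, mul_apply,
      ENNReal.ofReal_sum_of_nonneg fun z _ => mul_nonneg (hP0 z) (stepMatrix_nonneg z y)]
    exact Finset.sum_congr rfl fun z _ => by
      rw [ih, ENNReal.ofReal_mul (hP0 z), stepT_eq_ofReal hd]

theorem sum_heatT (hd : d ≠ 0) (x : T d N) (k : ℕ) : ∑ y, heatT d N x k y = 1 := by
  have hP := pow_mem (stepMatrix_mem_rowStochastic (N := N) hd) k
  simp_rw [heatT_eq_ofReal hd]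
  rw [← ENNReal.ofReal_sum_of_nonneg fun _ _ => nonneg_of_mem_rowStochastic hP,
    sum_row_of_mem_rowStochastic hP, ENNReal.ofReal_one]

theorem hct_eq_heatSemigroup (hd : d ≠ 0) (t : ℝ) (x y : T d N) :
    hct d N t x y = (stepMatrix d N).heatSemigroup t x y := by
  rw [hct, ← (hasSum_heatSemigroup_apply _ t x y).tsum_eq]
  congr 1 with k
  rw [heatT_eq_ofReal hd, ENNReal.toReal_ofReal (pow_apply_nonneg stepMatrix_nonneg k x y)]

theorem inv_card_T : ((Fintype.card (T d N) : ℝ))⁻¹ = 1 / (N : ℝ) ^ d := by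
  simp

theorem G_eq_zeroAvgGreen (hd : d ≠ 0) (x y : T d N) :
    G d N x y = (stepMatrix d N).zeroAvgGreen x y := by
  simp only [G, zeroAvgGreen, hct_eq_heatSemigroup hd, inv_card_T]

end Torus

section Killed

variable {d N : ℕ} [NeZero N] {U : Set (T d N)}

theorem kheatT_succ (x : T d N) (k : ℕ) (y : T d N) :
    kheatT d N U x (k + 1) y =
      if y ∈ U then ∑ z, kheatT d N U x k z * stepT d N z y else 0 := by
  rw [kheatT, tsum_fintype]

theorem kheatT_of_notMem_left {x : T d N} (hx : x ∉ U) (k : ℕ) (y : T d N) :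
    kheatT d N U x k y = 0 := by
  induction k generalizing y with
  | zero => simp [kheatT, hx]
  | succ k ih => simp [kheatT_succ, ih]

theorem kheatT_of_notMem_right (x : T d N) (k : ℕ) {y : T d N} (hy : y ∉ U) :
    kheatT d N U x k y = 0 := by
  cases k with
  | zero => simpa [kheatT] using fun h => h ▸ hy
  | succ k => simp [kheatT_succ, hy]

theorem kheatT_le_heatT (x : T d N) (k : ℕ) (y : T d N) :
    kheatT d N U x k y ≤ heatT d N x k y := by
  induction k generalizing y with
  | zero => simp only [kheatT, heatT]; split_ifs <;> simp_all
  | succ k ih =>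
    rw [kheatT_succ, heatT, tsum_fintype]
    split_ifs
    · gcongr with z
      exact ih z
    · exact zero_le

theorem kheatT_add (x : T d N) (j k : ℕ) (y : T d N) :
    kheatT d N U x (j + k) y = ∑ z, kheatT d N U x j z * kheatT d N U z k y := by
  induction k generalizing y with
  | zero =>
    by_cases hy : y ∈ U
    · simp [kheatT, ite_and, hy]
    · simp [kheatT, ite_and, kheatT_of_notMem_right _ _ hy, hy]
  | succ k ih =>
    rw [← add_assoc, kheatT_succ]
    simp only [kheatT_succ, mul_ite, mul_zero]
    split_ifs
    · simp only [ih, Finset.sum_mul, Finset.mul_sum, mul_assoc]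
      exact Finset.sum_comm
    · simp

theorem kheatT_succ_left {x : T d N} (hx : x ∈ U) (k : ℕ) (y : T d N) :
    kheatT d N U x (k + 1) y = ∑ z, stepT d N x z * kheatT d N U z k y := by
  rw [add_comm, kheatT_add]
  refine Finset.sum_congr rfl fun z _ => ?_
  by_cases hz : z ∈ U
  · simp [kheatT, hx, hz]
  · simp [kheatT_of_notMem_left hz, kheatT_of_notMem_right _ _ hz]

end Killed

section Survival

variable {d N : ℕ} [NeZero N] {U : Set (T d N)}

/-- `P_x[T_U > k]`. -/
noncomputable def survivalT (d N : ℕ) [NeZero N] (U : Set (T d N)) (x : T d N) (k : ℕ) :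
    ℝ≥0∞ :=
  ∑ z, kheatT d N U x k z

theorem etimeT_eq_tsum_survivalT (x : T d N) : etimeT d N U x = ∑' k, survivalT d N U x k := by
  simp only [etimeT, survivalT, tsum_fintype]

theorem survivalT_add (x : T d N) (j k : ℕ) :
    survivalT d N U x (j + k) = ∑ z, kheatT d N U x j z * survivalT d N U z k := by
  simp only [survivalT, kheatT_add, Finset.mul_sum]
  exact Finset.sum_comm

theorem survivalT_succ_le (hd : d ≠ 0) (x : T d N) (k : ℕ) :
    survivalT d N U x (k + 1) ≤ survivalT d N U x k := by
  calc survivalT d N U x (k + 1) ≤ ∑ y, ∑ z, kheatT d N U x k z * stepT d N z y :=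
        Finset.sum_le_sum fun y _ => by rw [kheatT_succ]; split_ifs <;> simp
    _ = survivalT d N U x k := by
        rw [Finset.sum_comm]
        simp [survivalT, ← Finset.mul_sum, sum_stepT hd]

theorem survivalT_antitone (hd : d ≠ 0) (x : T d N) : Antitone (survivalT d N U x) :=
  antitone_nat_of_succ_le (survivalT_succ_le hd x)

theorem survivalT_add_heatT_le_one (hd : d ≠ 0) (x : T d N) (k : ℕ) {u : T d N} (hu : u ∉ U) :
    survivalT d N U x k + heatT d N x k u ≤ 1 := by
  rw [survivalT, ← Finset.add_sum_erase _ _ (Finset.mem_univ u), kheatT_of_notMem_right _ _ hu,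
    zero_add, add_comm, ← sum_heatT hd x k, ← Finset.add_sum_erase _ _ (Finset.mem_univ u)]
  gcongr with z
  exact kheatT_le_heatT x k z

theorem exists_survivalT_le (hd : d ≠ 0) (hU : U ≠ univ) :
    ∃ K : ℕ, 0 < K ∧ ∃ ρ < 1, ∀ x, survivalT d N U x K ≤ ρ := by
  obtain ⟨u, hu⟩ := (ne_univ_iff_exists_notMem U).1 hU
  have hreach : ∀ x, ∃ k, heatT d N x k u ≠ 0 := fun x => by
    obtain ⟨k, -, hk⟩ := (isIrreducible_iff_exists_pow_pos stepMatrix_nonneg).1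
      (stepMatrix_isIrreducible hd) x u
    exact ⟨k, by simpa [heatT_eq_ofReal hd] using hk⟩
  choose L hL using hreach
  refine ⟨Finset.univ.sup L + 1, by omega, Finset.univ.sup fun x => 1 - heatT d N x (L x) u,
    (Finset.sup_lt_iff (by simp)).2 fun x _ => ENNReal.sub_lt_self one_ne_top one_ne_zero (hL x),
    fun x => ?_⟩
  calc survivalT d N U x (Finset.univ.sup L + 1) ≤ survivalT d N U x (L x) :=
        survivalT_antitone hd x ((Finset.le_sup (Finset.mem_univ x)).trans (Nat.le_succ _))
    _ ≤ 1 - heatT d N x (L x) u := ENNReal.le_sub_of_add_le_right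
        (by simp [heatT_eq_ofReal hd]) (survivalT_add_heatT_le_one hd x (L x) hu)
    _ ≤ _ := Finset.le_sup (f := fun x => 1 - heatT d N x (L x) u) (Finset.mem_univ x)

theorem survivalT_mul_le_pow {K : ℕ} {ρ : ℝ≥0∞} (hK : ∀ x, survivalT d N U x K ≤ ρ)
    (n : ℕ) (x : T d N) : survivalT d N U x (n * K) ≤ ρ ^ n := by
  induction n generalizing x with
  | zero =>
    simp only [survivalT, kheatT, ite_and, zero_mul, pow_zero, Finset.sum_ite_eq,
      Finset.mem_univ, if_true]
    split_ifs <;> simp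
  | succ n ih =>
    calc survivalT d N U x ((n + 1) * K)
          = ∑ z, kheatT d N U x (n * K) z * survivalT d N U z K := by
          rw [add_mul, one_mul, survivalT_add]
      _ ≤ ∑ z, kheatT d N U x (n * K) z * ρ := by gcongr with z; exact hK z
      _ = survivalT d N U x (n * K) * ρ := by rw [survivalT, Finset.sum_mul]
      _ ≤ ρ ^ (n + 1) := by rw [pow_succ]; gcongr; exact ih x

theorem etimeT_ne_top (hd : d ≠ 0) (hU : U ≠ univ) (x : T d N) : etimeT d N U x ≠ ⊤ := by
  obtain ⟨K, hK, ρ, hρ, hsurv⟩ := exists_survivalT_le hd hU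
  refine ne_top_of_le_ne_top (ENNReal.tsum_pow_div_ne_top hρ hK) ?_
  rw [etimeT_eq_tsum_survivalT]
  exact ENNReal.tsum_le_tsum fun k => (survivalT_antitone hd x (Nat.div_mul_le_self k K)).trans
    (survivalT_mul_le_pow hsurv _ x)

end Survival

section KilledSum

variable {d N : ℕ} [NeZero N] {U : Set (T d N)}

/-- `E_x[∑_{k < T_U} g(X_k)]`. -/
noncomputable def killedSumT (d N : ℕ) [NeZero N] (U : Set (T d N)) (g : T d N → ℝ≥0∞)
    (x : T d N) : ℝ≥0∞ :=
  ∑' k, ∑ w, kheatT d N U x k w * g w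

theorem killedSumT_of_notMem (g : T d N → ℝ≥0∞) {x : T d N} (hx : x ∉ U) :
    killedSumT d N U g x = 0 := by
  simp [killedSumT, kheatT_of_notMem_left hx]

theorem killedSumT_of_mem (g : T d N → ℝ≥0∞) {x : T d N} (hx : x ∈ U) :
    killedSumT d N U g x = g x + ∑ u, stepT d N x u * killedSumT d N U g u := by
  have hstep : ∀ k, ∑ w, kheatT d N U x (k + 1) w * g w
      = ∑ u, stepT d N x u * ∑ w, kheatT d N U u k w * g w := fun k => by
    simp only [kheatT_succ_left hx, Finset.sum_mul, Finset.mul_sum, mul_assoc]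
    exact Finset.sum_comm
  rw [killedSumT, tsum_eq_zero_add' ENNReal.summable, tsum_congr hstep,
    Summable.tsum_finsetSum fun _ _ => ENNReal.summable]
  simp [kheatT, hx, killedSumT, ENNReal.tsum_mul_left]

theorem killedSumT_le_etimeT {g : T d N → ℝ≥0∞} (hg : ∀ w, g w ≤ 1) (x : T d N) :
    killedSumT d N U g x ≤ etimeT d N U x := by
  rw [etimeT, killedSumT]
  gcongr with k
  rw [tsum_fintype]
  exact Finset.sum_le_sum fun w _ => mul_le_of_le_one_right zero_le (hg w)

theorem kgreenT_eq_killedSumT (x y : T d N) :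
    kgreenT d N U x y = killedSumT d N U (fun w => if w = y then 1 else 0) x := by
  simp [kgreenT, killedSumT]

theorem etimeT_eq_killedSumT (x : T d N) : etimeT d N U x = killedSumT d N U 1 x := by
  simp [etimeT, killedSumT]

theorem exitDistT_eq_killedSumT (x : T d N) {z : T d N} (hz : z ∉ U) :
    exitDistT d N U x z = (if x = z then 1 else 0) + killedSumT d N U (stepT d N · z) x := by
  rw [exitDistT, if_neg hz]
  congr 1
  · exact if_congr ⟨fun h => h.1, fun h => ⟨h, h ▸ hz⟩⟩ rfl rfl
  · simp [killedSumT, tsum_fintype]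

end KilledSum

section Identity

variable {d N : ℕ} [NeZero N] {U : Set (T d N)}

theorem exitDistT_of_notMem {x : T d N} (hx : x ∉ U) (z : T d N) :
    exitDistT d N U x z = if x = z then 1 else 0 := by
  by_cases hz : z ∈ U
  · rw [exitDistT, if_pos hz, if_neg (by rintro rfl; exact hx hz)]
  · rw [exitDistT_eq_killedSumT x hz, killedSumT_of_notMem _ hx, add_zero]

theorem toReal_killedSumT_of_mem (hd : d ≠ 0) (hU : U ≠ univ) {g : T d N → ℝ≥0∞}
    (hg : ∀ w, g w ≤ 1) {x : T d N} (hx : x ∈ U) :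
    (killedSumT d N U g x).toReal
      = (g x).toReal + (stepMatrix d N *ᵥ fun u => (killedSumT d N U g u).toReal) x := by
  have hfin : ∀ u, stepT d N x u * killedSumT d N U g u ≠ ⊤ := fun u =>
    ENNReal.mul_ne_top (stepT_ne_top hd x u)
      (ne_top_of_le_ne_top (etimeT_ne_top hd hU u) (killedSumT_le_etimeT hg u))
  rw [killedSumT_of_mem g hx, ENNReal.toReal_add (ne_top_of_le_ne_top one_ne_top (hg x))
    (ENNReal.sum_ne_top.2 fun u _ => hfin u), ENNReal.toReal_sum fun u _ => hfin u]
  simp [mulVec, dotProduct, stepMatrix, ENNReal.toReal_mul]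

theorem toReal_kgreenT_of_mem (hd : d ≠ 0) (hU : U ≠ univ) {x : T d N} (hx : x ∈ U)
    (y : T d N) :
    (kgreenT d N U x y).toReal
      = (1 : Matrix (T d N) (T d N) ℝ) x y
        + (stepMatrix d N *ᵥ fun u => (kgreenT d N U u y).toReal) x := by
  simp only [kgreenT_eq_killedSumT]
  rw [toReal_killedSumT_of_mem hd hU (fun w => by split_ifs <;> simp) hx]
  by_cases h : x = y <;> simp [h, one_apply]

theorem toReal_etimeT_of_mem (hd : d ≠ 0) (hU : U ≠ univ) {x : T d N} (hx : x ∈ U) :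
    (etimeT d N U x).toReal = 1 + (stepMatrix d N *ᵥ fun u => (etimeT d N U u).toReal) x := by
  simp only [etimeT_eq_killedSumT]
  rw [toReal_killedSumT_of_mem (g := 1) hd hU (fun w => le_rfl) hx]
  simp

theorem toReal_exitDistT_of_mem (hd : d ≠ 0) (hU : U ≠ univ) {x : T d N} (hx : x ∈ U)
    (z : T d N) :
    (exitDistT d N U x z).toReal
      = (stepMatrix d N *ᵥ fun u => (exitDistT d N U u z).toReal) x := by
  by_cases hz : z ∈ U
  · simp [exitDistT, hz, mulVec, dotProduct]
  have hle : ∀ w, stepT d N w z ≤ 1 := fun w => stepT_le_one hd w z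
  have hexit : ∀ u, (exitDistT d N U u z).toReal
      = (if u = z then 1 else 0) + (killedSumT d N U (stepT d N · z) u).toReal := fun u => by
    rw [exitDistT_eq_killedSumT u hz, ENNReal.toReal_add (by split_ifs <;> simp)
      (ne_top_of_le_ne_top (etimeT_ne_top hd hU u) (killedSumT_le_etimeT hle u))]
    split_ifs <;> simp
  rw [hexit, if_neg (by rintro rfl; exact hz hx), zero_add, toReal_killedSumT_of_mem hd hU hle hx]
  simp only [hexit, mulVec, dotProduct, mul_add, Finset.sum_add_distrib, mul_ite, mul_one,
    mul_zero, Finset.sum_ite_eq', Finset.mem_univ, if_true]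
  rfl

noncomputable def killedGreenDefect (d N : ℕ) [NeZero N] (U : Set (T d N)) (y x : T d N) : ℝ :=
  (kgreenT d N U x y).toReal + ∑ z, (exitDistT d N U x z).toReal * G d N z y
    - 1 / (N : ℝ) ^ d * (etimeT d N U x).toReal - G d N x y

theorem killedGreenDefect_of_notMem (y : T d N) {x : T d N} (hx : x ∉ U) :
    killedGreenDefect d N U y x = 0 := by
  simp [killedGreenDefect, kgreenT_eq_killedSumT, etimeT_eq_killedSumT, killedSumT_of_notMem _ hx,
    exitDistT_of_notMem hx, apply_ite ENNReal.toReal]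

theorem mulVec_killedGreenDefect (hd : d ≠ 0) (hU : U ≠ univ) (y : T d N) {x : T d N}
    (hx : x ∈ U) :
    (stepMatrix d N *ᵥ killedGreenDefect d N U y) x = killedGreenDefect d N U y x := by
  set P := stepMatrix d N
  set E : Matrix (T d N) (T d N) ℝ := of fun w z => (exitDistT d N U w z).toReal
  have hdef : killedGreenDefect d N U y = (fun w => (kgreenT d N U w y).toReal)
      + E *ᵥ (fun z => G d N z y) - (1 / (N : ℝ) ^ d) • (fun w => (etimeT d N U w).toReal)
      - fun w => G d N w y := rfl
  have hE : ((P * E) *ᵥ fun z => G d N z y) x = (E *ᵥ fun z => G d N z y) x := by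
    have hrow : ∀ z, (P * E) x z = E x z := fun z => by
      simp only [E, of_apply, toReal_exitDistT_of_mem hd hU hx z]
      rfl
    simp only [mulVec, dotProduct, hrow]
  have hP := stepMatrix_mem_doublyStochastic (N := N) hd
  have hG := mulVec_zeroAvgGreen (stepMatrix_mem_rowStochastic hd)
    (integrableOn_heatSemigroup_sub hP (stepMatrix_isIrreducible hd))
    (tendsto_heatSemigroup_apply hP (stepMatrix_isIrreducible hd)) x y
  simp only [← G_eq_zeroAvgGreen hd, inv_card_T] at hG
  rw [hdef, mulVec_sub, mulVec_sub, mulVec_add, mulVec_smul, mulVec_mulVec]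
  simp only [Pi.add_apply, Pi.sub_apply, Pi.smul_apply, smul_eq_mul]
  rw [hE, hG, toReal_kgreenT_of_mem hd hU hx, toReal_etimeT_of_mem hd hU hx]
  ring

end Identity

/-- For `U ⊊ T_N`:
`G_N(x,y) = g^U(x,y) + E_x[G_N(X_{T_U},y)] - N^{-d} E_x[T_U]`. -/
theorem zeroAvgGreen_killed_identity (d N : ℕ) (hd : 3 ≤ d) (hN : 1 ≤ N)
    (U : Set (T d N)) (hU : U ≠ Set.univ) (x y : T d N) :
    G d N x y = (kgreenT d N U x y).toReal
      + (∑' z, (exitDistT d N U x z).toReal * G d N z y)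
      - (1 / (N:ℝ) ^ d) * (etimeT d N U x).toReal := by
  have : NeZero N := ⟨by omega⟩
  have hd0 : d ≠ 0 := by omega
  have hzero := eq_zero_of_mulVec_apply_eq (stepMatrix_mem_rowStochastic hd0)
    (stepMatrix_isIrreducible hd0) hU (fun x hx => mulVec_killedGreenDefect hd0 hU y hx)
    (fun x hx => killedGreenDefect_of_notMem y hx)
  have := congrFun hzero x
  rw [killedGreenDefect, Pi.zero_apply] at this
  rw [tsum_fintype]
  linarith
end GFFPaper
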